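/- Let G be a finite simple non-bipartite graph and let x and y be distinct vertices of G such that the graph G + xy obtained by adding the edge xy is 2-connected. Then G contains a path from x to y of odd length and a path from x to y of even length. -/

import Mathlib

/-- A graph is `k`-connected if it has more than `k` vertices and removing any set of
fewer than `k` vertices leaves it connected. -/
def KConnected {V : Type*} [Fintype V] (G : SimpleGraph V) (k : ℕ) : Prop :=
  k < Fintype.card V ∧
    ∀ S : Finset V, S.card < k → (G.induce ((↑S : Set V)ᶜ)).Connected

/-- A graph is non-bipartite iff it contains a cycle of odd length. -/
def NonBipartite {V : Type*} (G : SimpleGraph V) : Prop :=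
  ∃ (v : V) (c : G.Walk v v), c.IsCycle ∧ Odd c.length

/-!
Let `C` be an odd cycle of `G`. Since `G + xy` is 2-connected, there are disjoint paths `P` from
`x` and `Q` from `y` to `C`, meeting `C` only at their ends `b₁ ≠ b₂`; as `P` avoids `y` and `Q`
avoids `x`, neither uses the edge `xy`, so both lie in `G`. The two arcs of `C` between `b₁` and
`b₂` have lengths of opposite parity, so `P`, either arc and `Q` reversed give `x`–`y` paths of
both parities.

The paths `P` and `Q` come from Whitney's theorem (two internally disjoint paths join any two
vertices of a 2-connected graph) applied between two new vertices, one joined to `x` and `y` and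
one joined to every vertex of `C`. Whitney's theorem is proved along a walk from `x` to `y`: given
two such paths from `x` to the predecessor `w` of `y`, a walk from `y` to `x` avoiding `w` is cut
at its first vertex on them and used to reroute one of them to `y`.
-/

lemma Set.Nontrivial.exists_inl_ne {α β : Type*} {S : Set α} (hS : S.Nontrivial) (v : α ⊕ β) :
    ∃ a ∈ S, .inl a ≠ v := by
  rcases v with u | t
  · obtain ⟨a, ha, hau⟩ := hS.exists_ne u
    exact ⟨a, ha, fun h => hau (Sum.inl_injective h)⟩
  · obtain ⟨a, ha⟩ := hS.nonempty
    exact ⟨a, ha, Sum.inl_ne_inr⟩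

namespace SimpleGraph

variable {V : Type*} {G H : SimpleGraph V}

/-- `H - v` is preconnected for every vertex `v`. -/
def NoCutVertex (H : SimpleGraph V) : Prop :=
  ∀ ⦃v a b : V⦄, a ≠ v → b ≠ v → ∃ w : H.Walk a b, v ∉ w.support

namespace Walk

variable {u v w x y : V}

def InternallyDisjoint (p q : G.Walk u v) : Prop :=
  ∀ z ∈ p.support, z ∈ q.support → z = u ∨ z = v

lemma InternallyDisjoint.symm {p q : G.Walk u v} (h : p.InternallyDisjoint q) :
    q.InternallyDisjoint p :=
  fun z hq hp => h z hp hq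

def IsPathInto (p : G.Walk u v) (S : Set V) : Prop :=
  p.IsPath ∧ v ∈ S ∧ ∀ z ∈ p.support, z ∈ S → z = v

theorem IsPath.append {p : G.Walk u v} {q : G.Walk v w} (hp : p.IsPath) (hq : q.IsPath)
    (h : ∀ z ∈ p.support, z ∈ q.support → z = v) : (p.append q).IsPath := by
  have hq' := hq.support_nodup
  rw [← cons_tail_support, List.nodup_cons] at hq'
  rw [isPath_def, support_append, List.nodup_append]
  refine ⟨hp.support_nodup, hq'.2, fun a ha b hb hab => ?_⟩
  subst hab
  obtain rfl := h a ha (List.mem_of_mem_tail hb)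
  exact hq'.1 hb

theorem exists_isPathInto {S : Set V} (w : G.Walk u v) (hv : v ∈ S) :
    ∃ c, ∃ p : G.Walk u c, p.IsPathInto S ∧ p.support ⊆ w.support := by
  classical
  suffices ∃ c ∈ S, ∃ p : G.Walk u c, (∀ z ∈ p.support, z ∈ S → z = c) ∧
      p.support ⊆ w.support by
    obtain ⟨c, hc, p, hpS, hpw⟩ := this
    have hbp := p.support_bypass_subset_support
    exact ⟨c, p.bypass, ⟨p.bypass_isPath, hc, fun z hz => hpS z (hbp hz)⟩,
      List.Subset.trans hbp hpw⟩
  induction w with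
  | nil => exact ⟨_, hv, nil, by simp, by simp⟩
  | @cons u u' v h w ih =>
    by_cases hu : u ∈ S
    · exact ⟨u, hu, nil, by simp, by simp⟩
    · obtain ⟨c, hc, p, hpS, hpw⟩ := ih hv
      refine ⟨c, hc, cons h p, ?_, ?_⟩
      · simp only [support_cons, List.mem_cons, forall_eq_or_imp]
        exact ⟨fun h => absurd h hu, hpS⟩
      · simpa only [support_cons] using List.cons_subset_cons u hpw

theorem InternallyDisjoint.reroute {p q : G.Walk x w} (hp : p.IsPath)
    (hq : q.IsPath) (hpq : p.InternallyDisjoint q) (hwy : G.Adj w y) (hxy : x ≠ y) {c : V}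
    (hc : c ∈ p.support) (hcw : c ≠ w) {R : G.Walk y c} (hR : R.IsPath)
    (hRpq : ∀ z ∈ R.support, z ∈ p.support ∨ z ∈ q.support → z = c) :
    ∃ P Q : G.Walk x y, P.IsPath ∧ Q.IsPath ∧ P.InternallyDisjoint Q := by
  classical
  have htake := p.support_takeUntil_subset_support hc
  have hcq : c ∈ q.support → c = x := fun h => (hpq c hc h).resolve_right hcw
  have hyq : y ∉ q.support := fun hy => by
    obtain rfl := hRpq y R.start_mem_support (Or.inr hy)
    exact hxy (hcq hy).symm
  refine ⟨(p.takeUntil c hc).append R.reverse, q.concat hwy,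
    (hp.takeUntil hc).append hR.reverse fun z hz hzR => ?_, hq.concat hyq hwy, ?_⟩
  · exact hRpq z (by simpa using hzR) (Or.inl (htake hz))
  intro z hzP hzQ
  rw [support_concat, List.mem_append, List.mem_singleton] at hzQ
  rcases hzQ with hzq | rfl
  · rcases mem_support_append_iff _ _ |>.mp hzP with hzt | hzR
    · refine (hpq z (htake hzt) hzq).imp_right fun hzw => ?_
      exact absurd (hzw ▸ hzt) (endpoint_notMem_support_takeUntil hp hc hcw.symm)
    · obtain rfl := hRpq z (by simpa using hzR) (Or.inr hzq)
      exact Or.inl (hcq hzq)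
  · exact Or.inr rfl

end Walk

theorem NoCutVertex.exists_internallyDisjoint_paths_of_adj {x y w : V} (hH : H.NoCutVertex)
    {p q : H.Walk x w} (hp : p.IsPath) (hq : q.IsPath) (hpq : p.InternallyDisjoint q)
    (hwy : H.Adj w y) (hxw : x ≠ w) (hxy : x ≠ y) :
    ∃ P Q : H.Walk x y, P.IsPath ∧ Q.IsPath ∧ P.InternallyDisjoint Q := by
  obtain ⟨R₀, hwR₀⟩ := hH hwy.ne.symm hxw
  obtain ⟨c, R, ⟨hR, hc, hRpq⟩, hRR₀⟩ :=
    R₀.exists_isPathInto (S := {z | z ∈ p.support ∨ z ∈ q.support}) (Or.inl p.start_mem_support)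
  have hcw : c ≠ w := by rintro rfl; exact hwR₀ (hRR₀ R.end_mem_support)
  rcases hc with hcp | hcq
  · exact hpq.reroute hp hq hwy hxy hcp hcw hR hRpq
  · exact hpq.symm.reroute hq hp hwy hxy hcq hcw hR fun z hz h => hRpq z hz h.symm

/-- For adjacent `x` and `y` the edge `xy`, taken twice, is a valid answer; the content is in the
case of non-adjacent vertices. -/
theorem NoCutVertex.exists_internallyDisjoint_paths {x y : V} (hH : H.NoCutVertex)
    (hxy : x ≠ y) (hr : H.Reachable x y) :
    ∃ p q : H.Walk x y, p.IsPath ∧ q.IsPath ∧ p.InternallyDisjoint q := by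
  obtain ⟨W⟩ := hr.symm
  clear hr
  induction W with
  | nil => exact absurd rfl hxy
  | @cons y w x hyw W ih =>
    by_cases hxw : x = w
    · subst hxw
      exact ⟨hyw.symm.toWalk, hyw.symm.toWalk, hyw.symm.isPath_toWalk, hyw.symm.isPath_toWalk,
        fun z hz _ => by simpa using hz⟩
    · obtain ⟨p, q, hp, hq, hpq⟩ := ih hxw
      exact hH.exists_internallyDisjoint_paths_of_adj hp hq hpq hyw.symm hxw hxy

theorem noCutVertex_of_forall_exists_hub
    (h : ∀ v, ∃ c ≠ v, ∀ z ≠ v, ∃ w : H.Walk z c, v ∉ w.support) : H.NoCutVertex := by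
  intro v a b ha hb
  obtain ⟨c, -, hc⟩ := h v
  obtain ⟨wa, hwa⟩ := hc a ha
  obtain ⟨wb, hwb⟩ := hc b hb
  refine ⟨wa.append wb.reverse, fun hv => ?_⟩
  rw [Walk.mem_support_append_iff, Walk.support_reverse, List.mem_reverse] at hv
  exact hv.elim hwa hwb

def addTerminals (H : SimpleGraph V) (A B : Set V) : SimpleGraph (V ⊕ Bool) where
  Adj
    | .inl u, .inl v => H.Adj u v
    | .inl u, .inr false | .inr false, .inl u => u ∈ A
    | .inl u, .inr true | .inr true, .inl u => u ∈ B
    | .inr _, .inr _ => False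
  symm := ⟨by rintro (u | _ | _) (v | _ | _) h <;> first | exact h.symm | exact h⟩
  loopless := ⟨by rintro (u | _ | _) h; exacts [H.loopless.irrefl u h, h, h]⟩

section addTerminals

variable {A B : Set V}

lemma Walk.exists_support_eq_map_inl_addTerminals {a b : V} (w : H.Walk a b) :
    ∃ w' : (H.addTerminals A B).Walk (.inl a) (.inl b), w'.support = w.support.map .inl :=
  ⟨w.map ⟨Sum.inl, id⟩, Walk.support_map _ _⟩

theorem NoCutVertex.addTerminals (hH : H.NoCutVertex) (hconn : H.Preconnected)
    (hA : A.Nontrivial) (hB : B.Nontrivial) : (H.addTerminals A B).NoCutVertex := by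
  refine noCutVertex_of_forall_exists_hub fun v => ?_
  have lift : ∀ {a b : V}, .inl a ≠ v → .inl b ≠ v →
      ∃ w : (H.addTerminals A B).Walk (.inl a) (.inl b), v ∉ w.support := by
    intro a b ha hb
    rcases v with u | t
    · obtain ⟨w, hw⟩ := hH (v := u) (fun h => ha (h ▸ rfl)) (fun h => hb (h ▸ rfl))
      obtain ⟨w', hw'⟩ := w.exists_support_eq_map_inl_addTerminals (A := A) (B := B)
      exact ⟨w', by simpa [hw'] using hw⟩
    · obtain ⟨w', hw'⟩ :=
        (hconn a b).some.exists_support_eq_map_inl_addTerminals (A := A) (B := B)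
      exact ⟨w', by simp [hw']⟩
  obtain ⟨a, haA, hav⟩ := hA.exists_inl_ne v
  obtain ⟨b, hbB, hbv⟩ := hB.exists_inl_ne v
  refine ⟨.inl a, hav, fun z hz => ?_⟩
  rcases z with u | _ | _
  · exact lift hz hav
  · exact ⟨Walk.cons (show (H.addTerminals A B).Adj (.inr false) (.inl a) from haA) .nil,
      by simp [hz.symm, hav.symm]⟩
  · obtain ⟨w, hw⟩ := lift hbv hav
    exact ⟨.cons (show (H.addTerminals A B).Adj (.inr true) (.inl b) from hbB) w,
      by simp [hz.symm, hw]⟩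

lemma exists_walk_to_of_walk_addTerminals {u : V}
    (w : (H.addTerminals A B).Walk (.inl u) (.inr true)) (hw : .inr false ∉ w.support) :
    ∃ b ∈ B, ∃ r : H.Walk u b, ∀ z ∈ r.support, .inl z ∈ w.support := by
  generalize hs : (Sum.inl u : V ⊕ Bool) = s at w
  generalize ht : (Sum.inr true : V ⊕ Bool) = t at w
  induction w generalizing u with
  | nil => cases hs.trans ht.symm
  | @cons _ m _ h w ih =>
    subst hs
    rcases m with v | _ | _
    · obtain ⟨b, hb, r, hr⟩ := ih rfl ht (fun h => hw (List.mem_cons_of_mem _ h))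
      have h' : H.Adj u v := h
      refine ⟨b, hb, .cons h' r, fun z hz => ?_⟩
      rw [Walk.support_cons, List.mem_cons] at hz ⊢
      exact hz.imp (congrArg _) (hr z)
    · simp at hw
    · exact ⟨u, h, .nil, by simp⟩

theorem exists_isPathInto_of_isPath_addTerminals
    {p : (H.addTerminals A B).Walk (.inr false) (.inr true)} (hp : p.IsPath) :
    ∃ a ∈ A, ∃ b, ∃ P : H.Walk a b, P.IsPathInto B ∧ ∀ z ∈ P.support, .inl z ∈ p.support := by
  cases p with
  | @cons _ m _ h p =>
    rcases m with a | _ | _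
    · obtain ⟨b, hb, r, hr⟩ := exists_walk_to_of_walk_addTerminals p
        ((Walk.cons_isPath_iff h p).mp hp).2
      obtain ⟨c, P, hP, hPr⟩ := r.exists_isPathInto hb
      exact ⟨a, h, c, P, hP, fun z hz => List.mem_cons_of_mem _ (hr z (hPr hz))⟩
    all_goals exact h.elim

end addTerminals

theorem NoCutVertex.exists_disjoint_paths_into (hH : H.NoCutVertex) (hconn : H.Preconnected)
    {x y : V} (hxy : x ≠ y) {B : Set V} (hB : B.Nontrivial) :
    ∃ b₁ b₂, ∃ (P : H.Walk x b₁) (Q : H.Walk y b₂),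
      P.IsPathInto B ∧ Q.IsPathInto B ∧ P.support.Disjoint Q.support := by
  have hK := hH.addTerminals hconn (Set.nontrivial_pair hxy) hB
  obtain ⟨w, -⟩ :=
    hK (v := .inl x) (a := .inr false) (b := .inr true) Sum.inr_ne_inl Sum.inr_ne_inl
  obtain ⟨p, q, hp, hq, hpq⟩ := hK.exists_internallyDisjoint_paths (by simp) ⟨w⟩
  obtain ⟨a₁, ha₁, b₁, P, hP, hPp⟩ := exists_isPathInto_of_isPath_addTerminals hp
  obtain ⟨a₂, ha₂, b₂, Q, hQ, hQq⟩ := exists_isPathInto_of_isPath_addTerminals hq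
  have hPQ : P.support.Disjoint Q.support := fun z hzP hzQ => by
    rcases hpq _ (hPp z hzP) (hQq z hzQ) with h | h <;> cases h
  have ha : a₁ ≠ a₂ := fun h => hPQ P.start_mem_support (h ▸ Q.start_mem_support)
  rcases ha₁ with rfl | rfl <;> rcases ha₂ with rfl | rfl
  · exact absurd rfl ha
  · exact ⟨_, _, P, Q, hP, hQ, hPQ⟩
  · exact ⟨_, _, Q, P, hQ, hP, hPQ.symm⟩
  · exact absurd rfl ha

namespace Walk

variable {u v x y : V}

lemma IsPathInto.transfer {S : Set V} {p : G.Walk u v} (hp : p.IsPathInto S)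
    (h : ∀ e ∈ p.edges, e ∈ H.edgeSet) : (p.transfer H h).IsPathInto S := by
  simpa [IsPathInto, support_transfer] using ⟨hp.1.transfer h, hp.2⟩

lemma mem_edgeSet_of_notMem_support (p : (G ⊔ fromEdgeSet {s(x, y)}).Walk u v)
    (hp : x ∉ p.support ∨ y ∉ p.support) {e : Sym2 V} (he : e ∈ p.edges) : e ∈ G.edgeSet := by
  have := p.edges_subset_edgeSet he
  rw [edgeSet_sup, edgeSet_fromEdgeSet] at this
  refine this.resolve_right fun ⟨he', _⟩ => ?_
  rw [Set.mem_singleton_iff] at he'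
  subst he'
  exact hp.elim (· (p.fst_mem_support_of_mem_edges he)) (· (p.snd_mem_support_of_mem_edges he))

lemma IsCycle.support_nontrivial {C : G.Walk v v} (hC : C.IsCycle) :
    {z | z ∈ C.support}.Nontrivial := by
  cases C with
  | nil => exact absurd .nil hC.not_nil
  | cons h p => exact ⟨_, by simp, _, by simp, h.ne⟩

theorem IsCycle.exists_arcs {C : G.Walk v v} (hC : C.IsCycle) {a b : V}
    (ha : a ∈ C.support) (hb : b ∈ C.support) (hab : a ≠ b) :
    ∃ T₁ T₂ : G.Walk a b, T₁.IsPath ∧ T₂.IsPath ∧ T₁.support ⊆ C.support ∧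
      T₂.support ⊆ C.support ∧ T₁.length + T₂.length = C.length := by
  classical
  have hb' : b ∈ (C.rotate a ha).support := (mem_support_rotate_iff ..).mpr hb
  set T := (C.rotate a ha).takeUntil b hb'
  set D := (C.rotate a ha).dropUntil b hb'
  have hTD : (T.append D).IsCycle := by rw [take_spec]; exact hC.rotate ha
  have hsub : ∀ z ∈ (T.append D).support, z ∈ C.support := by
    rw [take_spec]
    exact fun z => (mem_support_rotate_iff ..).mp
  refine ⟨T, D.reverse, hTD.isPath_of_append_left (not_nil_of_ne hab.symm),
    (hTD.isPath_of_append_right (not_nil_of_ne hab)).reverse,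
    fun z hz => hsub z (mem_support_append_iff _ _ |>.mpr (.inl hz)),
    fun z hz => hsub z (mem_support_append_iff _ _ |>.mpr (.inr (by simpa using hz))), ?_⟩
  rw [length_reverse, ← length_append, take_spec, length_rotate]

theorem IsCycle.exists_odd_and_even_paths {C : G.Walk v v} (hC : C.IsCycle)
    (hodd : Odd C.length) {b₁ b₂ : V} {P : G.Walk x b₁} {Q : G.Walk y b₂}
    (hP : P.IsPathInto {z | z ∈ C.support}) (hQ : Q.IsPathInto {z | z ∈ C.support})
    (hPQ : P.support.Disjoint Q.support) :
    (∃ R : G.Walk x y, R.IsPath ∧ Odd R.length) ∧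
      (∃ R : G.Walk x y, R.IsPath ∧ Even R.length) := by
  obtain ⟨T₁, T₂, hT₁, hT₂, hT₁C, hT₂C, hlen⟩ :=
    hC.exists_arcs hP.2.1 hQ.2.1 fun h => hPQ P.end_mem_support (h ▸ Q.end_mem_support)
  have through : ∀ T : G.Walk b₁ b₂, T.IsPath → T.support ⊆ C.support →
      (P.append (T.append Q.reverse)).IsPath := by
    intro T hT hTC
    refine hP.1.append (hT.append hQ.1.reverse fun z hzT hzQ =>
      hQ.2.2 z (by simpa using hzQ) (hTC hzT)) fun z hzP hz => ?_
    rcases mem_support_append_iff _ _ |>.mp hz with hzT | hzQ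
    · exact hP.2.2 z hzP (hTC hzT)
    · exact absurd (by simpa using hzQ) (hPQ hzP)
  have hpar : Odd ((P.append (T₁.append Q.reverse)).length +
      (P.append (T₂.append Q.reverse)).length) := by
    simp only [length_append, length_reverse]
    convert hodd.add_even (even_two_mul (P.length + Q.length)) using 1
    omega
  rcases Nat.even_or_odd (P.append (T₁.append Q.reverse)).length with h | h
  · exact ⟨⟨_, through T₂ hT₂ hT₂C, (Nat.odd_add'.mp hpar).mpr h⟩, ⟨_, through T₁ hT₁ hT₁C, h⟩⟩
  · exact ⟨⟨_, through T₁ hT₁ hT₁C, h⟩, ⟨_, through T₂ hT₂ hT₂C, (Nat.odd_add.mp hpar).mp h⟩⟩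

end Walk

end SimpleGraph

theorem KConnected.exists_walk_avoiding {V : Type*} [Fintype V] {G : SimpleGraph V} {k : ℕ}
    (h : KConnected G k) {S : Finset V} (hS : S.card < k) {a b : V} (ha : a ∉ S) (hb : b ∉ S) :
    ∃ w : G.Walk a b, ∀ z ∈ w.support, z ∉ S := by
  obtain ⟨w⟩ := (h.2 S hS).preconnected ⟨a, ha⟩ ⟨b, hb⟩
  obtain ⟨w', hw'⟩ : ∃ w' : G.Walk a b, w'.support = w.support.map Subtype.val :=
    ⟨w.map (SimpleGraph.Embedding.induce _).toHom, SimpleGraph.Walk.support_map _ _⟩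
  refine ⟨w', fun z hz => ?_⟩
  rw [hw', List.mem_map] at hz
  obtain ⟨z', -, rfl⟩ := hz
  exact z'.2

theorem KConnected.noCutVertex {V : Type*} [Fintype V] {G : SimpleGraph V}
    (h : KConnected G 2) : G.NoCutVertex := by
  intro v a b ha hb
  obtain ⟨w, hw⟩ :=
    h.exists_walk_avoiding (S := {v}) (by simp) (by simpa using ha) (by simpa using hb)
  exact ⟨w, fun hv => hw v hv (Finset.mem_singleton_self v)⟩

theorem KConnected.preconnected {V : Type*} [Fintype V] {G : SimpleGraph V} {k : ℕ}
    (h : KConnected G k) (hk : 0 < k) : G.Preconnected := fun a b =>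
  let ⟨w, _⟩ :=
    h.exists_walk_avoiding (S := ∅) hk (Finset.notMem_empty a) (Finset.notMem_empty b)
  ⟨w⟩

/-- If `G` is non-bipartite and `G + xy` is 2-connected, then `G` contains both an odd
path and an even path from `x` to `y`. -/
theorem odd_and_even_path_of_nonbipartite
    {V : Type*} [Fintype V] (G : SimpleGraph V) (x y : V) (hxy : x ≠ y)
    (hnb : NonBipartite G)
    (h2conn : KConnected (G ⊔ SimpleGraph.fromEdgeSet {s(x, y)}) 2) :
    (∃ P : G.Walk x y, P.IsPath ∧ Odd P.length) ∧
      (∃ P : G.Walk x y, P.IsPath ∧ Even P.length) := by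
  obtain ⟨v, C, hC, hodd⟩ := hnb
  obtain ⟨b₁, b₂, P, Q, hP, hQ, hPQ⟩ := h2conn.noCutVertex.exists_disjoint_paths_into
    (h2conn.preconnected two_pos) hxy hC.support_nontrivial
  have hyP : y ∉ P.support := fun hy => hPQ hy Q.start_mem_support
  have hxQ : x ∉ Q.support := fun hx => hPQ P.start_mem_support hx
  exact hC.exists_odd_and_even_paths hodd
    (hP.transfer fun _ => P.mem_edgeSet_of_notMem_support (.inr hyP))
    (hQ.transfer fun _ => Q.mem_edgeSet_of_notMem_support (.inl hxQ))
    (by simpa using hPQ)
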